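/- Let Ω ⊂ ℝ², z ∈ Ω, and let E, F ⊂ Ω be sets with dist_Ω(x,z) ≤ r for all x ∈ E and dist_Ω(x,z) ≥ R for all x ∈ F, where 0 < 2r ≤ R. Then the function f(x) = min{1, max{0, (log R − log dist_Ω(x,z))/(log R − log r)}} satisfies f = 1 on E, f = 0 on F, 0 ≤ f ≤ 1, and ∫_Ω |∇f|² dx ≤ C / log(R/r) for an absolute constant C. -/

import Mathlib

open MeasureTheory Set Filter Metric

/-- `g : ℂ → ℂ` is a weak (distributional) gradient of `u` on the planar domain `Ω ⊆ ℂ ≅ ℝ²`: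
the integration-by-parts identity holds against all smooth test functions compactly
supported in `Ω`.  The real pairing of `g x` with `v : ℂ` is `((starRingEnd ℂ) v * g x).re`. -/
def IsWeakGradC (Ω : Set ℂ) (u : ℂ → ℝ) (g : ℂ → ℂ) : Prop :=
  ∀ φ : ℂ → ℝ, ContDiff ℝ (⊤ : ℕ∞) φ → HasCompactSupport φ → tsupport φ ⊆ Ω →
    ∀ v : ℂ, ∫ x in Ω, u x * fderiv ℝ φ x v = - ∫ x in Ω, ((starRingEnd ℂ) v * g x).re * φ x

/-- Conformal capacity `Cap(E, F, Ω)`: the infimum of `∫_Ω |∇u|² + |u|²` over all locally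
integrable `u ∈ W^{1,2}_loc(Ω)` (with locally integrable weak gradient), continuous on
`E ∪ F ∪ Ω`, with `0 ≤ u ≤ 1` on `Ω`, `u = 1` on `E` and `u = 0` on `F`. -/
noncomputable def conformalCapacity (Ω E F : Set ℂ) : ℝ :=
  sInf { c : ℝ | ∃ (u : ℂ → ℝ) (g : ℂ → ℂ),
    IsWeakGradC Ω u g ∧
    LocallyIntegrableOn u Ω ∧ LocallyIntegrableOn g Ω ∧
    ContinuousOn u (E ∪ F ∪ Ω) ∧
    (∀ x ∈ Ω, 0 ≤ u x ∧ u x ≤ 1) ∧ (∀ x ∈ E, u x = 1) ∧ (∀ x ∈ F, u x = 0) ∧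
    c = ∫ x in Ω, (‖g x‖ ^ 2 + u x ^ 2) }

/-- Inner (intrinsic) distance in `Ω`: infimum of lengths (total variation) of curves
joining `x` and `y` inside `Ω`. -/
noncomputable def innerEDist (Ω : Set ℂ) (x y : ℂ) : ENNReal :=
  ⨅ (γ : ℝ → ℂ) (_ : ContinuousOn γ (Set.Icc 0 1)) (_ : γ '' Set.Icc 0 1 ⊆ Ω)
    (_ : γ 0 = x) (_ : γ 1 = y), eVariationOn γ (Set.Icc 0 1)

/-- Inner diameter of `A` with respect to `Ω`. -/
noncomputable def innerDiam (Ω A : Set ℂ) : ENNReal := ⨆ x ∈ A, ⨆ y ∈ A, innerEDist Ω x y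

/-- Inner distance between the sets `A` and `B` with respect to `Ω`. -/
noncomputable def innerDistSet (Ω A B : Set ℂ) : ENNReal := ⨅ x ∈ A, ⨅ y ∈ B, innerEDist Ω x y


lemma innerEDist_le (Ω : Set ℂ) {x y : ℂ} (γ : ℝ → ℂ) (hc : ContinuousOn γ (Set.Icc 0 1))
    (hi : γ '' Set.Icc 0 1 ⊆ Ω) (h0 : γ 0 = x) (h1 : γ 1 = y) :
    innerEDist Ω x y ≤ eVariationOn γ (Set.Icc 0 1) := by
  unfold innerEDist
  exact iInf_le_of_le γ <| iInf_le_of_le hc <| iInf_le_of_le hi <| iInf_le_of_le h0 <|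
    iInf_le_of_le h1 le_rfl

lemma innerEDist_self {Ω : Set ℂ} {z : ℂ} (hz : z ∈ Ω) : innerEDist Ω z z = 0 := by
  refine le_antisymm ?_ (zero_le)
  refine le_trans (innerEDist_le Ω (fun _ => z) continuousOn_const ?_ rfl rfl) ?_
  · intro w hw; rcases hw with ⟨_, _, rfl⟩; exact hz
  · exact le_of_eq (eVariationOn.constant_on (fun a ha b hb => by
      rcases ha with ⟨_, _, rfl⟩; rcases hb with ⟨_, _, rfl⟩; rfl))

lemma edist_le_innerEDist (Ω : Set ℂ) (x y : ℂ) : edist x y ≤ innerEDist Ω x y := by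
  unfold innerEDist
  refine le_iInf fun γ => le_iInf fun hc => le_iInf fun hi => le_iInf fun h0 => le_iInf fun h1 => ?_
  rw [← h0, ← h1]
  exact eVariationOn.edist_le γ (by simp) (by simp)

lemma innerEDist_triangle_seg {Ω : Set ℂ} {x y z : ℂ} (hseg : segment ℝ x y ⊆ Ω) :
    innerEDist Ω x z ≤ ENNReal.ofReal ‖x - y‖ + innerEDist Ω y z := by
  have H : ∀ γ : ℝ → ℂ, ContinuousOn γ (Set.Icc 0 1) → γ '' Set.Icc 0 1 ⊆ Ω → γ 0 = y →
      γ 1 = z → innerEDist Ω x z ≤ ENNReal.ofReal ‖x - y‖ + eVariationOn γ (Set.Icc 0 1) := by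
    intro γ hc hi h0 h1
    set v : ℂ := y - x with hv
    set σ : ℝ → ℂ := fun t => x + (min (2*t) 1) • v with hσ
    set ψ : ℝ → ℝ := fun t => max (2*t - 1) 0 with hψ
    set τ : ℝ → ℂ := fun t => γ (ψ t) with hτ
    set γ₂ : ℝ → ℂ := fun t => σ t + (τ t - y) with hγ₂
    have hσhalf : ∀ t : ℝ, 1/2 ≤ t → σ t = y := by
      intro t ht
      have : min (2*t) 1 = 1 := min_eq_right (by linarith)
      simp [hσ, this, hv]
    have hτhalf : ∀ t : ℝ, t ≤ 1/2 → τ t = y := by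
      intro t ht
      have : ψ t = 0 := max_eq_right (by simp [hψ]; linarith)
      simp [hτ, this, h0]
    have hψmem : ∀ t : ℝ, t ∈ Set.Icc (0:ℝ) 1 → ψ t ∈ Set.Icc (0:ℝ) 1 := by
      intro t ht
      constructor
      · exact le_max_right _ _
      · exact max_le (by linarith [ht.2]) zero_le_one
    have hσcont : Continuous σ :=
      continuous_const.add (((continuous_const.mul continuous_id).min continuous_const).smul
        continuous_const)
    have hψcont : Continuous ψ := ((continuous_const.mul continuous_id).sub
        continuous_const).max continuous_const
    have hτcont : ContinuousOn τ (Set.Icc 0 1) :=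
      hc.comp hψcont.continuousOn hψmem
    have hγ₂cont : ContinuousOn γ₂ (Set.Icc 0 1) :=
      (hσcont.continuousOn.add (hτcont.sub continuousOn_const))
    have hγ₂σ : Set.EqOn γ₂ σ (Set.Icc 0 (1/2)) := by
      intro t ht; simp [hγ₂, hτhalf t ht.2]
    have hγ₂τ : Set.EqOn γ₂ τ (Set.Icc (1/2) 1) := by
      intro t ht; simp [hγ₂, hσhalf t ht.1]
    have hσmem : ∀ t : ℝ, 0 ≤ t → σ t ∈ segment ℝ x y := by
      intro t ht
      rw [segment_eq_image']
      exact ⟨min (2*t) 1, ⟨le_min (by linarith) zero_le_one, min_le_right _ _⟩, rfl⟩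
    have himg : γ₂ '' Set.Icc 0 1 ⊆ Ω := by
      rintro w ⟨t, ht, rfl⟩
      rcases le_or_gt t (1/2) with h | h
      · rw [hγ₂σ ⟨ht.1, h⟩]
        exact hseg (hσmem t ht.1)
      · rw [hγ₂τ ⟨h.le, ht.2⟩]
        exact hi ⟨ψ t, hψmem t ht, rfl⟩
    have h20 : γ₂ 0 = x := by
      have h1 : γ₂ 0 = σ 0 := hγ₂σ ⟨le_rfl, by norm_num⟩
      rw [h1]; simp [hσ]
    have h21 : γ₂ 1 = z := by
      rw [hγ₂τ ⟨by norm_num, le_rfl⟩]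
      have hψ1 : ψ 1 = 1 := by simp [hψ]; norm_num
      simp only [hτ, hψ1, h1]
    have key := innerEDist_le Ω γ₂ hγ₂cont himg h20 h21
    refine key.trans ?_
    have hsplit : eVariationOn γ₂ (Set.Icc 0 1) =
        eVariationOn γ₂ (Set.Icc 0 (1/2)) + eVariationOn γ₂ (Set.Icc (1/2) 1) := by
      have := eVariationOn.Icc_add_Icc γ₂ (s := Set.Icc (0:ℝ) 1) (a := 0) (b := 1/2) (c := 1)
        (by norm_num) (by norm_num) (by norm_num)
      rw [Set.inter_eq_self_of_subset_right (Set.Icc_subset_Icc le_rfl (by norm_num)),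
        Set.inter_eq_self_of_subset_right (Set.Icc_subset_Icc (by norm_num) le_rfl),
        Set.inter_eq_self_of_subset_right (Set.Icc_subset_Icc le_rfl le_rfl)] at this
      exact this.symm
    have hpart1 : eVariationOn γ₂ (Set.Icc 0 (1/2)) ≤ ENNReal.ofReal ‖x - y‖ := by
      rw [eVariationOn.eq_of_eqOn hγ₂σ]
      have hA : LipschitzWith ‖v‖₊ (fun c : ℝ => x + c • v) := by
        apply LipschitzWith.of_dist_le_mul
        intro a b
        rw [dist_eq_norm, dist_eq_norm]
        have : (x + a • v) - (x + b • v) = (a - b) • v := by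
          rw [add_sub_add_left_eq_sub, ← sub_smul]
        rw [this, norm_smul, Real.norm_eq_abs, coe_nnnorm, mul_comm]
      have hm : MonotoneOn (fun t : ℝ => min (2*t) 1) (Set.Icc 0 (1/2)) := by
        intro a _ b _ hab
        exact min_le_min (by linarith) le_rfl
      have hcomp : σ = (fun c : ℝ => x + c • v) ∘ (fun t : ℝ => min (2*t) 1) := rfl
      rw [hcomp]
      refine le_trans (LipschitzOnWith.comp_eVariationOn_le (hA.lipschitzOnWith)
        (Set.mapsTo_univ _ _)) ?_
      have hvar : eVariationOn (fun t : ℝ => min (2*t) 1) (Set.Icc 0 (1/2)) ≤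
          ENNReal.ofReal 1 := by
        have := hm.eVariationOn_le (Set.left_mem_Icc.2 (by norm_num))
          (Set.right_mem_Icc.2 (by norm_num))
        rw [Set.inter_self] at this
        refine this.trans ?_
        norm_num
      calc (‖v‖₊ : ENNReal) * eVariationOn (fun t : ℝ => min (2*t) 1) (Set.Icc 0 (1/2))
          ≤ (‖v‖₊ : ENNReal) * ENNReal.ofReal 1 := by gcongr
        _ = ENNReal.ofReal ‖x - y‖ := by
            rw [ENNReal.ofReal_one, mul_one, ← enorm_eq_nnnorm, ← ofReal_norm, hv, norm_sub_rev]
    have hpart2 : eVariationOn γ₂ (Set.Icc (1/2) 1) = eVariationOn γ (Set.Icc 0 1) := by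
      rw [eVariationOn.eq_of_eqOn hγ₂τ]
      have hmψ : MonotoneOn ψ (Set.Icc (1/2) 1) := by
        intro a _ b _ hab
        exact max_le_max (by simp [hψ]; linarith) le_rfl
      have : τ = γ ∘ ψ := rfl
      rw [this, eVariationOn.comp_eq_of_monotoneOn γ ψ hmψ]
      congr 1
      apply Set.Subset.antisymm
      · rintro s ⟨t, ht, rfl⟩
        exact hψmem t ⟨by linarith [ht.1], ht.2⟩
      · intro s hs
        refine ⟨(s+1)/2, ⟨by linarith [hs.1], by linarith [hs.2]⟩, ?_⟩
        simp only [hψ]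
        rw [show 2 * ((s+1)/2) - 1 = s by ring]
        exact max_eq_left hs.1
    rw [hsplit, hpart2]
    exact add_le_add_left hpart1 _
  rcases eq_or_ne (innerEDist Ω y z) ⊤ with htop | htop
  · rw [htop]; simp
  have hsub : innerEDist Ω x z - ENNReal.ofReal ‖x - y‖ ≤ innerEDist Ω y z := by
    conv_rhs => rw [innerEDist]
    refine le_iInf fun γ => le_iInf fun hc => le_iInf fun hi => le_iInf fun h0 =>
      le_iInf fun h1 => ?_
    exact tsub_le_iff_left.2 (H γ hc hi h0 h1)
  calc innerEDist Ω x z ≤ ENNReal.ofReal ‖x - y‖ + (innerEDist Ω x z - ENNReal.ofReal ‖x - y‖) :=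
        le_add_tsub
    _ ≤ ENNReal.ofReal ‖x - y‖ + innerEDist Ω y z := add_le_add_right hsub _

lemma innerEDist_lt_top {Ω : Set ℂ} {z : ℂ} (hΩ : IsOpen Ω) (hconn : IsPreconnected Ω)
    (hz : z ∈ Ω) {x : ℂ} (hx : x ∈ Ω) : innerEDist Ω x z < ⊤ := by
  set U : Set ℂ := {w | w ∈ Ω ∧ innerEDist Ω w z < ⊤} with hU
  set V : Set ℂ := {w | w ∈ Ω ∧ innerEDist Ω w z = ⊤} with hV
  have hball : ∀ w ρ, Metric.ball w ρ ⊆ Ω → ∀ y ∈ Metric.ball w ρ,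
      innerEDist Ω y z ≤ ENNReal.ofReal ‖y - w‖ + innerEDist Ω w z := by
    intro w ρ hb y hy
    refine innerEDist_triangle_seg (fun p hp => hb ?_)
    have : segment ℝ y w ⊆ Metric.ball w ρ := by
      apply (convex_ball w ρ).segment_subset hy (Metric.mem_ball_self ?_)
      rcases Metric.nonempty_ball.1 ⟨y, hy⟩ with h; exact h
    exact this hp
  have hUopen : IsOpen U := by
    rw [Metric.isOpen_iff]
    rintro w ⟨hwΩ, hwfin⟩
    rcases Metric.isOpen_iff.1 hΩ w hwΩ with ⟨ρ, hρ, hb⟩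
    refine ⟨ρ, hρ, fun y hy => ⟨hb hy, ?_⟩⟩
    exact lt_of_le_of_lt (hball w ρ hb y hy)
      (by exact ENNReal.add_lt_top.2 ⟨ENNReal.ofReal_lt_top, hwfin⟩)
  have hVopen : IsOpen V := by
    rw [Metric.isOpen_iff]
    rintro w ⟨hwΩ, hwtop⟩
    rcases Metric.isOpen_iff.1 hΩ w hwΩ with ⟨ρ, hρ, hb⟩
    refine ⟨ρ, hρ, fun y hy => ⟨hb hy, ?_⟩⟩
    by_contra hne
    have hyfin : innerEDist Ω y z < ⊤ := lt_top_iff_ne_top.2 hne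
    have hseg : segment ℝ w y ⊆ Ω := fun p hp =>
      hb ((convex_ball w ρ).segment_subset (Metric.mem_ball_self hρ) hy hp)
    have := lt_of_le_of_lt (innerEDist_triangle_seg hseg)
      (ENNReal.add_lt_top.2 ⟨ENNReal.ofReal_lt_top, hyfin⟩)
    rw [hwtop] at this; exact absurd this (by simp)
  have hsub : Ω ⊆ U := by
    refine hconn.subset_left_of_subset_union hUopen hVopen ?_ ?_ ⟨z, hz, hz, ?_⟩
    · rw [Set.disjoint_left]
      rintro w ⟨_, hfin⟩ ⟨_, htop⟩
      rw [htop] at hfin; exact absurd hfin (by simp)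
    · intro w hw
      rcases eq_or_ne (innerEDist Ω w z) ⊤ with h | h
      · exact Or.inr ⟨hw, h⟩
      · exact Or.inl ⟨hw, lt_top_iff_ne_top.2 h⟩
    · rw [innerEDist_self hz]; simp
  exact (hsub hx).2

lemma dist_d_le {Ω : Set ℂ} {z : ℂ} (hΩ : IsOpen Ω) (hconn : IsPreconnected Ω)
    (hz : z ∈ Ω) {x y : ℂ} (hx : x ∈ Ω) (hy : y ∈ Ω) (hseg : segment ℝ x y ⊆ Ω) :
    dist (innerEDist Ω x z).toReal (innerEDist Ω y z).toReal ≤ ‖x - y‖ := by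
  have hfx := innerEDist_lt_top hΩ hconn hz hx
  have hfy := innerEDist_lt_top hΩ hconn hz hy
  have key : ∀ a b : ℂ, a ∈ Ω → b ∈ Ω → segment ℝ a b ⊆ Ω →
      innerEDist Ω a z < ⊤ → innerEDist Ω b z < ⊤ →
      (innerEDist Ω a z).toReal - (innerEDist Ω b z).toReal ≤ ‖a - b‖ := by
    intro a b _ _ hs ha hb
    have h1 := innerEDist_triangle_seg (z := z) hs
    have h2 : (innerEDist Ω a z).toReal ≤
        (ENNReal.ofReal ‖a - b‖ + innerEDist Ω b z).toReal := by
      apply ENNReal.toReal_mono _ h1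
      exact (ENNReal.add_lt_top.2 ⟨ENNReal.ofReal_lt_top, hb⟩).ne
    rw [ENNReal.toReal_add ENNReal.ofReal_ne_top hb.ne, ENNReal.toReal_ofReal (norm_nonneg _)]
      at h2
    linarith
  rw [Real.dist_eq, abs_sub_le_iff]
  constructor
  · exact key x y hx hy hseg hfx hfy
  · rw [norm_sub_rev]
    exact key y x hy hx (by rwa [segment_symm]) hfy hfx

lemma norm_le_d {Ω : Set ℂ} {z : ℂ} (hΩ : IsOpen Ω) (hconn : IsPreconnected Ω)
    (hz : z ∈ Ω) {x : ℂ} (hx : x ∈ Ω) : ‖x - z‖ ≤ (innerEDist Ω x z).toReal := by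
  have h := edist_le_innerEDist Ω x z
  have := ENNReal.toReal_mono (innerEDist_lt_top hΩ hconn hz hx).ne h
  rwa [edist_dist, ENNReal.toReal_ofReal dist_nonneg, dist_eq_norm] at this

lemma log_dist_le {m a b : ℝ} (hm : 0 < m) (ha : m ≤ a) (hb : m ≤ b) :
    |Real.log a - Real.log b| ≤ m⁻¹ * |a - b| := by
  have key : ∀ u v : ℝ, m ≤ u → m ≤ v → v ≤ u → Real.log u - Real.log v ≤ m⁻¹ * (u - v) := by
    intro u v hu hv huv
    have hv0 : 0 < v := lt_of_lt_of_le hm hv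
    have hu0 : 0 < u := lt_of_lt_of_le hm hu
    have : Real.log u - Real.log v = Real.log (u / v) := (Real.log_div hu0.ne' hv0.ne').symm
    rw [this]
    have h1 : Real.log (u / v) ≤ u / v - 1 := Real.log_le_sub_one_of_pos (by positivity)
    have h2 : u / v - 1 = (u - v) / v := by field_simp
    have h3 : (u - v) / v ≤ (u - v) / m := by
      apply div_le_div_of_nonneg_left (by linarith) hm hv
    calc Real.log (u/v) ≤ (u - v)/v := by rw [← h2]; exact h1
      _ ≤ (u - v)/m := h3
      _ = m⁻¹ * (u - v) := by ring
  rcases le_total b a with h | h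
  · rw [abs_of_nonneg (by rw [sub_nonneg]; exact Real.log_le_log (lt_of_lt_of_le hm hb) h),
      abs_of_nonneg (by linarith)]
    exact key a b ha hb h
  · rw [abs_sub_comm, abs_sub_comm a b,
      abs_of_nonneg (by rw [sub_nonneg]; exact Real.log_le_log (lt_of_lt_of_le hm ha) h),
      abs_of_nonneg (by linarith)]
    exact key b a hb ha h

noncomputable def clampF (r R t : ℝ) : ℝ :=
  min 1 (max 0 ((Real.log R - Real.log (max r t)) / (Real.log R - Real.log r)))

lemma clampF_dist_le {r R : ℝ} (hr : 0 < r) (hL : 0 < Real.log R - Real.log r)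
    {m s t : ℝ} (hm : 0 < m) (hms : m ≤ max r s) (hmt : m ≤ max r t) :
    |clampF r R s - clampF r R t| ≤ (Real.log R - Real.log r)⁻¹ * m⁻¹ * |s - t| := by
  set L := Real.log R - Real.log r with hLdef
  set qs := (Real.log R - Real.log (max r s)) / L with hqs
  set qt := (Real.log R - Real.log (max r t)) / L with hqt
  have step1 : |clampF r R s - clampF r R t| ≤ |qs - qt| := by
    unfold clampF
    refine le_trans (abs_min_sub_min_le_max 1 _ 1 _) ?_
    simp only [sub_self, abs_zero]
    refine max_le (abs_nonneg _) ?_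
    rw [max_comm (0:ℝ) (_ / _), max_comm (0:ℝ) (_ / _)]
    exact abs_max_sub_max_le_abs _ _ _
  have step2 : |qs - qt| = |Real.log (max r s) - Real.log (max r t)| / L := by
    rw [hqs, hqt, div_sub_div_same, abs_div, abs_of_pos hL]
    congr 1
    rw [abs_sub_comm]
    congr 1
    ring
  have step3 : |Real.log (max r s) - Real.log (max r t)| ≤ m⁻¹ * |max r s - max r t| :=
    log_dist_le hm hms hmt
  have step4 : |max r s - max r t| ≤ |s - t| := by
    rw [max_comm r s, max_comm r t]
    exact abs_max_sub_max_le_abs _ _ _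
  calc |clampF r R s - clampF r R t| ≤ |Real.log (max r s) - Real.log (max r t)| / L := by
        rw [← step2]; exact step1
    _ ≤ (m⁻¹ * |s - t|) / L := by
        gcongr
        exact step3.trans (by gcongr)
    _ = L⁻¹ * m⁻¹ * |s - t| := by ring

lemma integral_oneD {r R : ℝ} (hr : 0 < r) (hrR : r ≤ R) :
    ∫ y in Set.Ioi (0:ℝ), y * (if y ≤ R then ((max r y)^2)⁻¹ else 0) =
      1/2 + Real.log (R / r) := by
  have hR : 0 < R := lt_of_lt_of_le hr hrR
  have hsplit0 : Set.Ioi (0:ℝ) = Set.Ioc 0 R ∪ Set.Ioi R := (Set.Ioc_union_Ioi_eq_Ioi hR.le).symm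
  set G : ℝ → ℝ := fun y => y * ((max r y)^2)⁻¹ with hG
  have hGcont : Continuous G := by
    apply continuous_id.mul
    apply Continuous.inv₀
    · exact (continuous_const.max continuous_id).pow 2
    · intro y
      have : 0 < max r y := lt_of_lt_of_le hr (le_max_left _ _)
      positivity
  have hGint : IntegrableOn G (Set.Ioc 0 R) := by
    exact (hGcont.integrableOn_Icc (a := 0) (b := R)).mono_set Set.Ioc_subset_Icc_self
  have heq1 : ∫ y in Set.Ioi (0:ℝ), y * (if y ≤ R then ((max r y)^2)⁻¹ else 0) =
      ∫ y in Set.Ioc 0 R, G y := by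
    rw [hsplit0, setIntegral_union (Set.Ioc_disjoint_Ioi le_rfl) measurableSet_Ioi]
    · have h2 : ∫ y in Set.Ioi R, y * (if y ≤ R then ((max r y)^2)⁻¹ else 0) = 0 := by
        rw [setIntegral_congr_fun measurableSet_Ioi (g := fun _ => (0:ℝ))
          (fun y hy => by simp [not_le.2 (Set.mem_Ioi.1 hy)])]
        simp
      rw [h2, add_zero]
      exact setIntegral_congr_fun measurableSet_Ioc
        (fun y hy => by simp [hG, Set.mem_Ioc.1 hy |>.2])
    · apply (hGint.congr_fun ?_ measurableSet_Ioc)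
      exact fun y hy => by simp [hG, Set.mem_Ioc.1 hy |>.2]
    · apply IntegrableOn.congr_fun (integrableOn_zero) _ measurableSet_Ioi
      exact fun y hy => by simp [not_le.2 (Set.mem_Ioi.1 hy)]
  rw [heq1]
  have hsplit1 : Set.Ioc (0:ℝ) R = Set.Ioc 0 r ∪ Set.Ioc r R := (Set.Ioc_union_Ioc_eq_Ioc hr.le hrR).symm
  rw [hsplit1, setIntegral_union (Set.Ioc_disjoint_Ioc.2 (by simp [min_le_iff])) measurableSet_Ioc
    (hGint.mono_set (by rw [hsplit1]; exact Set.subset_union_left))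
    (hGint.mono_set (by rw [hsplit1]; exact Set.subset_union_right))]
  have hpart1 : ∫ y in Set.Ioc (0:ℝ) r, G y = 1/2 := by
    have : ∀ y ∈ Set.Ioc (0:ℝ) r, G y = y * (r^2)⁻¹ := by
      intro y hy
      simp [hG, max_eq_left hy.2]
    rw [setIntegral_congr_fun measurableSet_Ioc this, ← intervalIntegral.integral_of_le hr.le]
    rw [intervalIntegral.integral_mul_const, integral_id]
    field_simp
    ring
  have hpart2 : ∫ y in Set.Ioc r R, G y = Real.log (R / r) := by
    have : ∀ y ∈ Set.Ioc r R, G y = y⁻¹ := by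
      intro y hy
      have hy0 : 0 < y := lt_trans hr hy.1
      rw [hG]
      simp only [max_eq_right hy.1.le]
      field_simp
    rw [setIntegral_congr_fun measurableSet_Ioc this, ← intervalIntegral.integral_of_le hrR]
    exact integral_inv (by
      intro h
      rcases h with h
      have := Set.mem_uIcc.1 h
      rcases this with ⟨h1, _⟩ | ⟨_, h2⟩ <;> linarith)
  rw [hpart1, hpart2]

lemma integral_H0 {r R : ℝ} (hr : 0 < r) (hrR : r ≤ R) :
    ∫ x : ℂ, (if ‖x‖ ≤ R then ((max r ‖x‖)^2)⁻¹ else 0) =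
      Real.pi + 2 * Real.pi * Real.log (R / r) := by
  set h : ℝ → ℝ := fun y => if y ≤ R then ((max r y)^2)⁻¹ else 0 with hh
  have key := MeasureTheory.integral_fun_norm_addHaar (volume : Measure ℂ) h
  rw [Complex.finrank_real_complex] at key
  have hball : ((volume : Measure ℂ) (Metric.ball 0 1)).toReal = Real.pi := by
    rw [Complex.volume_ball]
    simp
  rw [measureReal_def, hball] at key
  rw [key]
  have : ∫ y in Set.Ioi (0:ℝ), y ^ (2-1) • h y =
      ∫ y in Set.Ioi (0:ℝ), y * (if y ≤ R then ((max r y)^2)⁻¹ else 0) := by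
    apply setIntegral_congr_fun measurableSet_Ioi
    intro y _
    simp [hh, smul_eq_mul]
  rw [this, integral_oneD hr hrR]
  simp only [nsmul_eq_mul, smul_eq_mul]
  push_cast
  ring

/-- the truncated logarithmic test function built from the inner distance
is `1` on `E`, `0` on `F`, takes values in `[0,1]`, and its Dirichlet energy is at most
`C / log(R/r)` for an absolute constant `C`.  (In the formula, the lower truncation
`max r ·` of the inner distance implements the clamping `min 1 ·` of the quotient,
and avoids the junk value of `Real.log` at `0`.) -/
theorem stmt1 :
    ∃ C : ℝ, 0 < C ∧
      ∀ (Ω : Set ℂ) (z : ℂ) (E F : Set ℂ) (r R : ℝ),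
        IsOpen Ω → IsConnected Ω → z ∈ Ω → E ⊆ Ω → F ⊆ Ω →
        0 < r → 2 * r ≤ R →
        (∀ x ∈ E, innerEDist Ω x z ≤ ENNReal.ofReal r) →
        (∀ x ∈ F, ENNReal.ofReal R ≤ innerEDist Ω x z) →
        ∀ f : ℂ → ℝ,
          (f = fun x => min 1 (max 0
            ((Real.log R - Real.log (max r (innerEDist Ω x z).toReal)) /
              (Real.log R - Real.log r)))) →
          (∀ x ∈ E, f x = 1) ∧ (∀ x ∈ F, f x = 0) ∧
          (∀ x ∈ Ω, 0 ≤ f x ∧ f x ≤ 1) ∧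
          ∃ g : ℂ → ℂ, IsWeakGradC Ω f g ∧
            ∫ x in Ω, ‖g x‖ ^ 2 ≤ C / Real.log (R / r) := by
  classical
  have hlog2 : (0:ℝ) < Real.log 2 := Real.log_pos one_lt_two
  refine ⟨Real.pi / Real.log 2 + 2 * Real.pi, by positivity, ?_⟩
  intro Ω z E F r R hΩ hconn hz hE hF hr h2r hEr hFR f hf
  have hconn' : IsPreconnected Ω := hconn.isPreconnected
  have hrlt : r < R := by linarith
  have hR : 0 < R := by linarith
  have hrR : r ≤ R := hrlt.le
  have hlogs : Real.log r < Real.log R := Real.log_lt_log hr hrlt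
  set L : ℝ := Real.log R - Real.log r with hLdef
  have hLpos : 0 < L := by simp [hLdef]; linarith
  have hLlog : Real.log (R / r) = L := by
    rw [Real.log_div hR.ne' hr.ne']
  have hLge : Real.log 2 ≤ L := by
    rw [← hLlog]
    apply Real.log_le_log (by norm_num)
    rw [le_div_iff₀ hr]; linarith
  set d : ℂ → ℝ := fun x => (innerEDist Ω x z).toReal with hd
  have hfx : ∀ x, f x = clampF r R (d x) := fun x => by rw [hf]; rfl
  have hd_nonneg : ∀ x, 0 ≤ d x := fun x => ENNReal.toReal_nonneg
  have hd_lip : ∀ x y, x ∈ Ω → y ∈ Ω → segment ℝ x y ⊆ Ω → dist (d x) (d y) ≤ ‖x - y‖ :=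
    fun x y hx hy hseg => dist_d_le hΩ hconn' hz hx hy hseg
  have hd_lower : ∀ x ∈ Ω, ‖x - z‖ ≤ d x := fun x hx => norm_le_d hΩ hconn' hz hx
  -- range of f
  have hrange : ∀ x, 0 ≤ f x ∧ f x ≤ 1 := by
    intro x
    rw [hfx]
    exact ⟨le_min zero_le_one (le_max_left 0 _), min_le_left _ _⟩
  -- f = 0 whenever R ≤ d
  have hf0 : ∀ x, R ≤ d x → f x = 0 := by
    intro x hxd
    rw [hfx]
    unfold clampF
    have h1 : max r (d x) = d x := max_eq_right (le_trans hrR hxd)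
    rw [h1]
    have h2 : Real.log R ≤ Real.log (d x) := Real.log_le_log hR hxd
    have h3 : (Real.log R - Real.log (d x)) / L ≤ 0 :=
      div_nonpos_iff.2 (Or.inr ⟨by linarith, hLpos.le⟩)
    rw [max_eq_left h3, min_eq_right zero_le_one]
  -- part 1 : f = 1 on E
  have part1 : ∀ x ∈ E, f x = 1 := by
    intro x hx
    have hfin : innerEDist Ω x z ≠ ⊤ :=
      (lt_of_le_of_lt (hEr x hx) ENNReal.ofReal_lt_top).ne
    have hdx : d x ≤ r := by
      have := ENNReal.toReal_mono ENNReal.ofReal_ne_top (hEr x hx)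
      rwa [ENNReal.toReal_ofReal hr.le] at this
    rw [hfx]
    unfold clampF
    rw [max_eq_left hdx, div_self hLpos.ne']
    norm_num
  -- part 2 : f = 0 on F
  have part2 : ∀ x ∈ F, f x = 0 := by
    intro x hx
    apply hf0
    have := ENNReal.toReal_mono (innerEDist_lt_top hΩ hconn' hz (hF hx)).ne (hFR x hx)
    rwa [ENNReal.toReal_ofReal hR.le] at this
  refine ⟨part1, part2, fun x _ => hrange x, ?_⟩
  -- continuity of d on Ω
  have hd_cont : ContinuousOn d Ω := by
    intro x hx
    rcases Metric.isOpen_iff.1 hΩ x hx with ⟨ε, hε, hb⟩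
    have hlip : LipschitzOnWith 1 d (Metric.ball x ε) := by
      rw [lipschitzOnWith_iff_dist_le_mul]
      intro a ha b hb'
      have hseg : segment ℝ a b ⊆ Ω := fun p hp =>
        hb ((convex_ball x ε).segment_subset ha hb' hp)
      calc dist (d a) (d b) ≤ ‖a - b‖ := hd_lip a b (hb ha) (hb hb') hseg
        _ = 1 * dist a b := by rw [one_mul, dist_eq_norm]
    exact (hlip.continuousOn.continuousAt (Metric.ball_mem_nhds x hε)).continuousWithinAt
  -- local Lipschitz estimate for f
  have hflip : ∀ a b : ℂ, a ∈ Ω → b ∈ Ω → segment ℝ a b ⊆ Ω → ∀ t₀ : ℝ,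
      t₀ ≤ d a → t₀ ≤ d b → dist (f a) (f b) ≤ L⁻¹ * (max r t₀)⁻¹ * dist a b := by
    intro a b ha hb hseg t₀ hta htb
    have hm : 0 < max r t₀ := lt_of_lt_of_le hr (le_max_left _ _)
    have hest := clampF_dist_le hr hLpos (s := d a) (t := d b) hm
      (max_le_max le_rfl hta) (max_le_max le_rfl htb)
    rw [hfx, hfx, Real.dist_eq]
    refine le_trans hest ?_
    have h1 : |d a - d b| ≤ dist a b := by
      calc |d a - d b| = dist (d a) (d b) := (Real.dist_eq _ _).symm
        _ ≤ ‖a - b‖ := hd_lip a b ha hb hseg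
        _ = dist a b := (dist_eq_norm a b).symm
    have h2 : (0:ℝ) ≤ (Real.log R - Real.log r)⁻¹ * (max r t₀)⁻¹ := by positivity
    exact mul_le_mul_of_nonneg_left h1 h2
  -- Lipschitz on convex subsets with constant L⁻¹ r⁻¹
  have hflip0 : ∀ a b : ℂ, a ∈ Ω → b ∈ Ω → segment ℝ a b ⊆ Ω →
      dist (f a) (f b) ≤ L⁻¹ * r⁻¹ * dist a b := by
    intro a b ha hb hseg
    have := hflip a b ha hb hseg 0 (hd_nonneg a) (hd_nonneg b)
    rwa [max_eq_left hr.le] at this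
  -- a.e. differentiability
  set D : Set ℂ := {x | x ∈ Ω ∧ ¬ DifferentiableAt ℝ f x} with hD
  have hDnull : volume D = 0 := by
    apply measure_null_of_locally_null
    rintro x ⟨hxΩ, _⟩
    rcases Metric.isOpen_iff.1 hΩ x hxΩ with ⟨ε, hε, hb⟩
    have hlipb : LipschitzOnWith (Real.toNNReal (L⁻¹ * r⁻¹)) f (Metric.ball x ε) := by
      rw [lipschitzOnWith_iff_dist_le_mul]
      intro a ha b hb'
      rw [Real.coe_toNNReal _ (by positivity)]
      exact hflip0 a b (hb ha) (hb hb')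
        (fun p hp => hb ((convex_ball x ε).segment_subset ha hb' hp))
    obtain ⟨ft, hftlip, hfteq⟩ := hlipb.extend_real
    refine ⟨Metric.ball x ε ∩ {y | ¬ DifferentiableAt ℝ ft y}, ?_, ?_⟩
    · refine mem_nhdsWithin.2 ⟨Metric.ball x ε, isOpen_ball, mem_ball_self hε, ?_⟩
      rintro y ⟨hyb, _, hynd⟩
      refine ⟨hyb, fun hdiff => hynd ?_⟩
      have heq : f =ᶠ[nhds y] ft := by
        filter_upwards [isOpen_ball.mem_nhds hyb] with w hw
        exact hfteq hw
      exact heq.differentiableAt_iff.2 hdiff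
    · refine measure_mono_null inter_subset_right ?_
      have h1 := hftlip.ae_differentiableAt (μ := volume)
      rwa [ae_iff] at h1
  -- gradient norm bound at differentiable points
  have hgradb : ∀ x ∈ Ω, DifferentiableAt ℝ f x → ‖fderiv ℝ f x‖ ≤ L⁻¹ * (max r (d x))⁻¹ := by
    intro x hxΩ hdiff
    rcases Metric.isOpen_iff.1 hΩ x hxΩ with ⟨ε₀, hε₀, hb⟩
    have key : ∀ ε : ℝ, 0 < ε → ε ≤ ε₀ → ‖fderiv ℝ f x‖ ≤ L⁻¹ * (max r (d x - ε))⁻¹ := by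
      intro ε hεp hεle
      have hsub : Metric.ball x ε ⊆ Ω := fun y hy => hb (Metric.ball_subset_ball hεle hy)
      have hdlow : ∀ a ∈ Metric.ball x ε, d x - ε ≤ d a := by
        intro a ha
        have hseg : segment ℝ x a ⊆ Ω := fun p hp =>
          hsub ((convex_ball x ε).segment_subset (mem_ball_self hεp) ha hp)
        have h1 : dist (d x) (d a) < ε := by
          refine lt_of_le_of_lt (hd_lip x a hxΩ (hsub ha) hseg) ?_
          rw [← dist_eq_norm, dist_comm]
          exact ha
        have h1' : |d x - d a| < ε := by rwa [Real.dist_eq] at h1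
        have h2 := abs_sub_le_iff.1 h1'.le
        linarith [h2.1]
      have hlipb : LipschitzOnWith (Real.toNNReal (L⁻¹ * (max r (d x - ε))⁻¹)) f
          (Metric.ball x ε) := by
        rw [lipschitzOnWith_iff_dist_le_mul]
        intro a ha b hb'
        have hm : (0:ℝ) < max r (d x - ε) := lt_of_lt_of_le hr (le_max_left _ _)
        rw [Real.coe_toNNReal _ (by positivity)]
        exact hflip a b (hsub ha) (hsub hb')
          (fun p hp => hsub ((convex_ball x ε).segment_subset ha hb' hp))
          (d x - ε) (hdlow a ha) (hdlow b hb')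
      have h2 := hdiff.hasFDerivAt.le_of_lipschitzOn
        (isOpen_ball.mem_nhds (mem_ball_self hεp)) hlipb
      have hm : (0:ℝ) < max r (d x - ε) := lt_of_lt_of_le hr (le_max_left _ _)
      rwa [Real.coe_toNNReal _ (by positivity)] at h2
    have hcont : ContinuousAt (fun ε : ℝ => L⁻¹ * (max r (d x - ε))⁻¹) 0 := by
      refine ContinuousAt.mul continuousAt_const (ContinuousAt.inv₀ ?_ ?_)
      · exact continuousAt_const.max (continuousAt_const.sub continuousAt_id)
      · have : (0:ℝ) < max r (d x - 0) := lt_of_lt_of_le hr (le_max_left _ _)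
        exact this.ne'
    have htend : Tendsto (fun ε : ℝ => L⁻¹ * (max r (d x - ε))⁻¹) (nhdsWithin 0 (Set.Ioi 0))
        (nhds (L⁻¹ * (max r (d x))⁻¹)) := by
      have h3 := hcont.tendsto
      simp only [sub_zero] at h3
      exact h3.mono_left nhdsWithin_le_nhds
    refine ge_of_tendsto htend ?_
    filter_upwards [Ioo_mem_nhdsGT_of_mem (Set.mem_Ico.2 ⟨le_rfl, hε₀⟩)] with ε hε
    exact key ε hε.1 hε.2.le
  -- zero gradient when d > R
  have hgrad0 : ∀ x ∈ Ω, R < d x → fderiv ℝ f x = 0 := by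
    intro x hxΩ hdx
    have hU : IsOpen (Ω ∩ d ⁻¹' (Set.Ioi R)) :=
      hd_cont.isOpen_inter_preimage hΩ isOpen_Ioi
    have heq : f =ᶠ[nhds x] (fun _ => (0:ℝ)) := by
      filter_upwards [hU.mem_nhds ⟨hxΩ, hdx⟩] with y hy
      exact hf0 y (le_of_lt hy.2)
    rw [heq.fderiv_eq]
    exact fderiv_const_apply 0
  -- define g
  set g : ℂ → ℂ := fun x => if h : x ∈ Ω ∧ DifferentiableAt ℝ f x then
      ((fderiv ℝ f x 1 : ℝ) + (fderiv ℝ f x Complex.I : ℝ) * Complex.I) else 0 with hg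
  -- pairing identity
  have hpair : ∀ x, x ∈ Ω ∧ DifferentiableAt ℝ f x → ∀ v : ℂ,
      fderiv ℝ f x v = ((starRingEnd ℂ) v * g x).re := by
    intro x hx v
    simp only [hg]
    rw [dif_pos hx]
    have hv : v = v.re • (1:ℂ) + v.im • Complex.I := by
      simp [Complex.real_smul, Complex.re_add_im]
    calc fderiv ℝ f x v = fderiv ℝ f x (v.re • (1:ℂ) + v.im • Complex.I) := by rw [← hv]
      _ = v.re * fderiv ℝ f x 1 + v.im * fderiv ℝ f x Complex.I := by
          rw [map_add, (fderiv ℝ f x).map_smul, (fderiv ℝ f x).map_smul]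
          simp [smul_eq_mul]
      _ = ((starRingEnd ℂ) v *
            ((fderiv ℝ f x 1 : ℝ) + (fderiv ℝ f x Complex.I : ℝ) * Complex.I)).re := by
          simp [Complex.mul_re]
          try ring
  -- norm of g bounded by operator norm of fderiv
  have hgnorm : ∀ x, x ∈ Ω ∧ DifferentiableAt ℝ f x → ‖g x‖ ≤ ‖fderiv ℝ f x‖ := by
    intro x hx
    have h1 : ‖g x‖^2 = fderiv ℝ f x (g x) := by
      rw [hpair x hx (g x), Complex.conj_mul']
      rw [← Complex.ofReal_pow, Complex.ofReal_re]
    rcases eq_or_lt_of_le (norm_nonneg (g x)) with h0 | h0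
    · rw [← h0]; exact norm_nonneg _
    · refine le_of_mul_le_mul_right ?_ h0
      calc ‖g x‖ * ‖g x‖ = ‖g x‖^2 := (sq (‖g x‖)).symm
        _ = fderiv ℝ f x (g x) := h1
        _ ≤ ‖fderiv ℝ f x (g x)‖ := le_abs_self _
        _ ≤ ‖fderiv ℝ f x‖ * ‖g x‖ := (fderiv ℝ f x).le_opNorm (g x)
  -- pointwise square bound
  set bnd : ℂ → ℝ := fun x =>
    L⁻¹^2 * (if ‖x - z‖ ≤ R then ((max r ‖x - z‖)^2)⁻¹ else 0) with hbnd
  have hbnd_nonneg : ∀ x, 0 ≤ bnd x := by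
    intro x
    simp only [hbnd]
    apply mul_nonneg (by positivity)
    split
    · positivity
    · exact le_refl 0
  have hHb : ∀ x, ‖g x‖^2 ≤ bnd x := by
    intro x
    by_cases hx : x ∈ Ω ∧ DifferentiableAt ℝ f x
    · by_cases hdR : d x ≤ R
      · have hxz : ‖x - z‖ ≤ R := le_trans (hd_lower x hx.1) hdR
        simp only [hbnd]
        rw [if_pos hxz]
        have h1 : ‖g x‖ ≤ L⁻¹ * (max r (d x))⁻¹ := (hgnorm x hx).trans (hgradb x hx.1 hx.2)
        have hm1 : (0:ℝ) < max r ‖x - z‖ := lt_of_lt_of_le hr (le_max_left _ _)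
        have h2 : (max r (d x))⁻¹ ≤ (max r ‖x - z‖)⁻¹ :=
          inv_anti₀ hm1 (max_le_max le_rfl (hd_lower x hx.1))
        calc ‖g x‖^2 ≤ (L⁻¹ * (max r (d x))⁻¹)^2 := by
              exact pow_le_pow_left₀ (norm_nonneg _) h1 2
          _ ≤ (L⁻¹ * (max r ‖x - z‖)⁻¹)^2 := by
              apply pow_le_pow_left₀ (by positivity)
              exact mul_le_mul_of_nonneg_left h2 (by positivity)
          _ = L⁻¹^2 * ((max r ‖x - z‖)^2)⁻¹ := by
              rw [mul_pow, inv_pow, inv_pow]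
      · have hgz : g x = 0 := by
          simp only [hg]
          rw [dif_pos hx, hgrad0 x hx.1 (not_le.1 hdR)]
          simp
        rw [hgz]
        simpa using hbnd_nonneg x
    · have hgz : g x = 0 := by simp only [hg]; rw [dif_neg hx]
      rw [hgz]
      simpa using hbnd_nonneg x
  refine ⟨g, ?_, ?_⟩
  · -- weak gradient property
    intro φ hφ hφc hφsub v
    have hK : IsCompact (tsupport φ) := hφc
    obtain ⟨δ, hδpos, hδ⟩ := hK.exists_cthickening_subset_open hΩ hφsub
    set A : Set ℂ := Metric.cthickening (δ/2) (tsupport φ) with hA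
    have hKA : tsupport φ ⊆ A := Metric.self_subset_cthickening _
    have hAΩ : A ⊆ Ω := le_trans (Metric.cthickening_mono (by linarith) _) hδ
    have hA2 : ∀ a ∈ A, ∀ b ∈ A, dist a b ≤ δ/2 → segment ℝ a b ⊆ Ω := by
      intro a ha b hb hab p hp
      apply hδ
      rw [Metric.mem_cthickening_iff]
      have hpa : dist p a ≤ δ/2 := by
        have hmem : p ∈ Metric.closedBall a (dist a b) :=
          (convex_closedBall a (dist a b)).segment_subset
            (Metric.mem_closedBall_self dist_nonneg)
            (by rw [Metric.mem_closedBall, dist_comm]) hp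
        exact le_trans (Metric.mem_closedBall.1 hmem) hab
      have h1 : EMetric.infEdist p (tsupport φ) ≤
          edist p a + EMetric.infEdist a (tsupport φ) := EMetric.infEdist_le_edist_add_infEdist
      have h2 : EMetric.infEdist a (tsupport φ) ≤ ENNReal.ofReal (δ/2) :=
        Metric.mem_cthickening_iff.1 ha
      calc EMetric.infEdist p (tsupport φ) ≤ ENNReal.ofReal (δ/2) + ENNReal.ofReal (δ/2) := by
            refine le_trans h1 (add_le_add ?_ h2)
            rw [edist_dist]
            exact ENNReal.ofReal_le_ofReal hpa
        _ = ENNReal.ofReal δ := by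
            rw [← ENNReal.ofReal_add (by linarith) (by linarith)]
            norm_num
    set c₁ : ℝ := max (L⁻¹ * r⁻¹) (2/δ) with hc₁
    have hc₁pos : 0 ≤ c₁ := le_trans (by positivity) (le_max_left _ _)
    have hlipA : LipschitzOnWith (Real.toNNReal c₁) f A := by
      rw [lipschitzOnWith_iff_dist_le_mul]
      intro a ha b hb
      rw [Real.coe_toNNReal _ hc₁pos]
      rcases le_or_gt (dist a b) (δ/2) with hle | hlt
      · refine le_trans (hflip0 a b (hAΩ ha) (hAΩ hb) (hA2 a ha b hb hle)) ?_
        exact mul_le_mul_of_nonneg_right (le_max_left _ _) dist_nonneg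
      · have hfb : dist (f a) (f b) ≤ 1 := by
          rw [Real.dist_eq, abs_le]
          constructor
          · linarith [(hrange a).1, (hrange b).2]
          · linarith [(hrange a).2, (hrange b).1]
        refine le_trans hfb ?_
        have h1 : (1:ℝ) ≤ (2/δ) * dist a b := by
          rw [div_mul_eq_mul_div, le_div_iff₀ (by linarith)]
          linarith
        exact le_trans h1 (mul_le_mul_of_nonneg_right (le_max_right _ _) dist_nonneg)
    obtain ⟨ft, hftlip, hfteq⟩ := hlipA.extend_real
    obtain ⟨Dφ, hφlip⟩ := ContDiff.lipschitzWith_of_hasCompactSupport hφc hφ (by simp)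
    have IBP := hftlip.integral_lineDeriv_mul_eq (μ := (volume : Measure ℂ)) hφlip hφc v
    have hφd : ∀ (x : ℂ) (w : ℂ), lineDeriv ℝ φ x w = fderiv ℝ φ x w := fun x w =>
      ((hφ.differentiable (by simp) x).hasFDerivAt.hasLineDerivAt w).lineDeriv
    have hstep1 : ∀ x, f x * fderiv ℝ φ x v = ft x * fderiv ℝ φ x v := by
      intro x
      by_cases hx : x ∈ A
      · rw [hfteq hx]
      · rw [fderiv_of_notMem_tsupport ℝ (fun h => hx (hKA h))]
        simp
    have hstep2 : ∫ x in Ω, f x * fderiv ℝ φ x v = ∫ x, ft x * fderiv ℝ φ x v := by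
      calc ∫ x in Ω, f x * fderiv ℝ φ x v = ∫ x in Ω, ft x * fderiv ℝ φ x v :=
            setIntegral_congr_fun hΩ.measurableSet (fun x _ => hstep1 x)
        _ = ∫ x, ft x * fderiv ℝ φ x v :=
            setIntegral_eq_integral_of_forall_compl_eq_zero (fun x hx => by
              rw [fderiv_of_notMem_tsupport ℝ (fun h => hx (hφsub h))]
              simp)
    have hIBP2 : ∫ x, ft x * fderiv ℝ φ x v = - ∫ x, lineDeriv ℝ ft x v * φ x := by
      have hptw : ∀ x, ft x * fderiv ℝ φ x v = -(lineDeriv ℝ φ x (-v) * ft x) := by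
        intro x
        rw [hφd x (-v), map_neg]
        ring
      calc ∫ x, ft x * fderiv ℝ φ x v = ∫ x, -(lineDeriv ℝ φ x (-v) * ft x) := by
            exact integral_congr_ae (Filter.EventuallyEq.of_eq (funext hptw))
        _ = - ∫ x, lineDeriv ℝ φ x (-v) * ft x := integral_neg _
        _ = - ∫ x, lineDeriv ℝ ft x v * φ x := by rw [← IBP]
    have hae2 : (fun x => lineDeriv ℝ ft x v * φ x) =ᵐ[(volume : Measure ℂ)]
        (fun x => ((starRingEnd ℂ) v * g x).re * φ x) := by
      have hDc : ∀ᵐ x ∂(volume : Measure ℂ), x ∉ D := measure_eq_zero_iff_ae_notMem.1 hDnull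
      filter_upwards [hDc] with x hxD
      by_cases hxK : x ∈ tsupport φ
      · have hxΩ : x ∈ Ω := hφsub hxK
        have hxdiff : DifferentiableAt ℝ f x := by
          by_contra hnd
          exact hxD ⟨hxΩ, hnd⟩
        have hball : Metric.ball x (δ/2) ⊆ A := by
          intro y hy
          rw [hA, Metric.mem_cthickening_iff]
          refine le_trans (EMetric.infEdist_le_edist_of_mem hxK) ?_
          rw [edist_dist]
          exact ENNReal.ofReal_le_ofReal (le_of_lt (by rwa [Metric.mem_ball] at hy))
        have heqn : f =ᶠ[nhds x] ft := by
          filter_upwards [Metric.ball_mem_nhds x (by linarith : (0:ℝ) < δ/2)] with w hw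
          exact hfteq (hball hw)
        have hdiff_ft : DifferentiableAt ℝ ft x := heqn.differentiableAt_iff.1 hxdiff
        have h1 : lineDeriv ℝ ft x v = fderiv ℝ ft x v :=
          (hdiff_ft.hasFDerivAt.hasLineDerivAt v).lineDeriv
        have h2 : fderiv ℝ ft x = fderiv ℝ f x := heqn.fderiv_eq.symm
        rw [h1, h2, hpair x ⟨hxΩ, hxdiff⟩ v]
      · rw [image_eq_zero_of_notMem_tsupport hxK, mul_zero, mul_zero]
    have hstep3 : ∫ x, lineDeriv ℝ ft x v * φ x =
        ∫ x in Ω, ((starRingEnd ℂ) v * g x).re * φ x := by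
      rw [integral_congr_ae hae2]
      exact (setIntegral_eq_integral_of_forall_compl_eq_zero (fun x hx => by
        rw [image_eq_zero_of_notMem_tsupport (fun h => hx (hφsub h)), mul_zero])).symm
    rw [hstep2, hIBP2, hstep3]
  · -- energy bound
    have hbase : Integrable (fun w : ℂ => if ‖w‖ ≤ R then ((max r ‖w‖)^2)⁻¹ else 0) := by
      have heqind : (fun w : ℂ => if ‖w‖ ≤ R then ((max r ‖w‖)^2)⁻¹ else 0) =
          Set.indicator (Metric.closedBall 0 R) (fun w => ((max r ‖w‖)^2)⁻¹) := by
        funext w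
        rw [Set.indicator_apply]
        by_cases hw : ‖w‖ ≤ R
        · rw [if_pos hw, if_pos (mem_closedBall_zero_iff.2 hw)]
        · rw [if_neg hw, if_neg (fun h => hw (mem_closedBall_zero_iff.1 h))]
      rw [heqind]
      refine (ContinuousOn.integrableOn_compact (isCompact_closedBall 0 R)
        ?_).integrable_indicator measurableSet_closedBall
      refine Continuous.continuousOn ?_
      refine Continuous.inv₀ ((continuous_const.max continuous_norm).pow 2) ?_
      intro w
      have : (0:ℝ) < max r ‖w‖ := lt_of_lt_of_le hr (le_max_left _ _)
      positivity
    have hshift : Integrable (fun x : ℂ => if ‖x - z‖ ≤ R then ((max r ‖x - z‖)^2)⁻¹ else 0) :=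
      hbase.comp_sub_right z
    have hbint : Integrable bnd := by
      simp only [hbnd]
      exact hshift.const_mul _
    have hmono : ∫ x in Ω, ‖g x‖^2 ≤ ∫ x in Ω, bnd x :=
      integral_mono_of_nonneg (Filter.Eventually.of_forall fun x => by positivity)
        hbint.restrict (Filter.Eventually.of_forall fun x => hHb x)
    have hΩle : ∫ x in Ω, bnd x ≤ ∫ x, bnd x :=
      setIntegral_le_integral hbint (Filter.Eventually.of_forall fun x => hbnd_nonneg x)
    have hcomp : ∫ x, bnd x = L⁻¹^2 * (Real.pi + 2*Real.pi*L) := by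
      simp only [hbnd]
      rw [MeasureTheory.integral_const_mul]
      have htr : ∫ x : ℂ, (if ‖x - z‖ ≤ R then ((max r ‖x - z‖)^2)⁻¹ else 0) =
          Real.pi + 2*Real.pi*Real.log (R/r) := by
        rw [← integral_H0 hr hrR]
        exact integral_sub_right_eq_self
          (fun w : ℂ => if ‖w‖ ≤ R then ((max r ‖w‖)^2)⁻¹ else 0) z
      rw [htr, hLlog]
    have hfinal : L⁻¹^2 * (Real.pi + 2*Real.pi*L) ≤
        (Real.pi / Real.log 2 + 2 * Real.pi) / L := by
      rw [le_div_iff₀ hLpos]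
      have he1 : L⁻¹^2 * (Real.pi + 2*Real.pi*L) * L = Real.pi/L + 2*Real.pi := by
        field_simp
      rw [he1]
      have h1 : Real.pi/L ≤ Real.pi/Real.log 2 :=
        div_le_div_of_nonneg_left Real.pi_pos.le hlog2 hLge
      linarith
    calc ∫ x in Ω, ‖g x‖^2 ≤ ∫ x, bnd x := le_trans hmono hΩle
      _ = L⁻¹^2 * (Real.pi + 2*Real.pi*L) := hcomp
      _ ≤ (Real.pi / Real.log 2 + 2 * Real.pi) / L := hfinal
      _ = (Real.pi / Real.log 2 + 2 * Real.pi) / Real.log (R/r) := by rw [hLlog]
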